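/- Let X ∈ ℝ^{n×p}, λ > 0, β ∈ ℝ^p, and let pen be a real-valued polyhedral gauge on ℝ^p (pen(b) = max{⟨u_1,b⟩,…,⟨u_k,b⟩} with u_1 = 0). Then there exist y ∈ ℝ^n and β̂ ∈ S_{X,λpen}(y) with ∂pen(β̂) = ∂pen(β) if and only if there exist y ∈ ℝ^n and β̂ ∈ S_{X,λpen}(y) with ∂pen(β̂) ⊆ ∂pen(β). -/

import Mathlib

open scoped RealInnerProductSpace

noncomputable section

/-- Convert a plain coordinate vector to an element of Euclidean space. -/
def toEuc {n : ℕ} (v : Fin n → ℝ) : EuclideanSpace ℝ (Fin n) :=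
  (WithLp.equiv 2 (Fin n → ℝ)).symm v

/-- The subdifferential of `φ : ℝ^p → ℝ` at `β`:
`∂φ(β) = {s : φ(β) + ⟪s, b − β⟫ ≤ φ(b) for all b}`. -/
def subdiff {p : ℕ} (φ : EuclideanSpace ℝ (Fin p) → ℝ) (β : EuclideanSpace ℝ (Fin p)) :
    Set (EuclideanSpace ℝ (Fin p)) :=
  {s | ∀ b, φ β + ⟪s, b - β⟫ ≤ φ b}

/-- `S_{X,λpen}(y)`: the set of minimizers of `b ↦ (1/2)‖y − Xb‖₂² + λ·pen(b)`. -/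
def Smin {n p : ℕ} (X : Matrix (Fin n) (Fin p) ℝ) (lam : ℝ)
    (pen : EuclideanSpace ℝ (Fin p) → ℝ) (y : EuclideanSpace ℝ (Fin n)) :
    Set (EuclideanSpace ℝ (Fin p)) :=
  {b | ∀ b', (1/2) * ‖y - toEuc (X.mulVec b)‖^2 + lam * pen b
        ≤ (1/2) * ‖y - toEuc (X.mulVec b')‖^2 + lam * pen (toEuc b')}

/-- The row space of a matrix `X`: `{Xᵀz : z ∈ ℝ^n}`. -/
def rowSpace {n p : ℕ} (X : Matrix (Fin n) (Fin p) ℝ) : Set (EuclideanSpace ℝ (Fin p)) :=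
  Set.range fun z : EuclideanSpace ℝ (Fin n) => toEuc (X.transpose.mulVec z)

/-- The normal cone of a set `K` at `x`: `{s : ⟪s, b − x⟫ ≤ 0 for all b ∈ K}`. -/
def normalCone' {p : ℕ} (K : Set (EuclideanSpace ℝ (Fin p))) (x : EuclideanSpace ℝ (Fin p)) :
    Set (EuclideanSpace ℝ (Fin p)) :=
  {s | ∀ b ∈ K, ⟪s, b - x⟫ ≤ 0}

/-- The supremum norm `‖x‖_∞` on Euclidean space. -/
def supNorm {p : ℕ} (x : EuclideanSpace ℝ (Fin p)) : ℝ := ⨆ i, abs (x i)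

/-- `F` is an (exposed) face of `P`: `F = {x ∈ P : ⟪a,x⟫ = c}` for some valid inequality
`⟪a,x⟫ ≤ c` of `P`. -/
def IsFace {p : ℕ} (P F : Set (EuclideanSpace ℝ (Fin p))) : Prop :=
  ∃ (a : EuclideanSpace ℝ (Fin p)) (c : ℝ),
    (∀ x ∈ P, ⟪a, x⟫ ≤ c) ∧ F = {x ∈ P | ⟪a, x⟫ = c}

/-!
The optimality condition for `b ↦ ½‖y − Xb‖² + λ·pen(b)` with convex `pen` says that `b` is a
minimizer exactly when `Xᵀ(y − Xb) ∈ λ·∂pen(b)`, so whether `b` is a minimizer for `y` depends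
only on the residual `y − Xb`. If `β̂` is a minimizer for `y` and `∂pen(β̂) ⊆ ∂pen(β)`, then the
residual `r = y − Xβ̂` satisfies the optimality condition at `β` as well, so `β` itself is a
minimizer for the observation `r + Xβ`, which has the same residual at `β`.
-/

open Set Filter Topology
open scoped Pointwise Matrix

theorem ConvexOn.finset_sup' {𝕜 E β ι : Type*} [Semiring 𝕜] [PartialOrder 𝕜] [AddCommMonoid E]
    [AddCommMonoid β] [LinearOrder β] [IsOrderedAddMonoid β] [SMul 𝕜 E] [Module 𝕜 β]
    [PosSMulStrictMono 𝕜 β] {t : Set E} {s : Finset ι} (hs : s.Nonempty) {f : ι → E → β}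
    (hf : ∀ i ∈ s, ConvexOn 𝕜 t (f i)) :
    ConvexOn 𝕜 t fun x => s.sup' hs fun i => f i x := by
  simp_rw [← Finset.sup'_apply]
  exact Finset.sup'_induction hs f (fun _ h₁ _ h₂ => h₁.sup h₂) hf

section LeastSquares

variable {E F : Type*} [NormedAddCommGroup E] [InnerProductSpace ℝ E]
  [NormedAddCommGroup F] [InnerProductSpace ℝ F]

theorem isMinOn_univ_half_sq_norm_sub_add_iff (A : E →ₗ[ℝ] F) {f : E → ℝ}
    (hf : ConvexOn ℝ univ f) (y : F) (b : E) :
    IsMinOn (fun x => 1 / 2 * ‖y - A x‖ ^ 2 + f x) univ b ↔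
      ∀ x, f b + ⟪y - A b, A (x - b)⟫ ≤ f x := by
  simp only [isMinOn_univ_iff]
  constructor
  · intro hmin x
    set r := y - A b
    set d := A (x - b)
    have hsmall : ∀ t : ℝ, 0 < t → t ≤ 1 → f b + ⟪r, d⟫ - f x ≤ t * (1 / 2 * ‖d‖ ^ 2) := by
      intro t ht₀ ht₁
      have hxt := hmin (b + t • (x - b))
      have hres : y - A (b + t • (x - b)) = r - t • d := by
        simp only [map_add, map_smul, r, d]; abel
      have hconv : f (b + t • (x - b)) ≤ (1 - t) * f b + t * f x := by
        rw [show b + t • (x - b) = (1 - t) • b + t • x by module]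
        exact hf.2 (mem_univ b) (mem_univ x) (by linarith) ht₀.le (sub_add_cancel 1 t)
      rw [hres, norm_sub_sq_real r, inner_smul_right, norm_smul, mul_pow, Real.norm_eq_abs,
        sq_abs] at hxt
      have hscaled : t * (f b + ⟪r, d⟫ - f x) ≤ t * (t * (1 / 2 * ‖d‖ ^ 2)) := by linarith
      exact le_of_mul_le_mul_left hscaled ht₀
    have hlim : Tendsto (fun t : ℝ => t * (1 / 2 * ‖d‖ ^ 2)) (𝓝[>] 0) (𝓝 0) :=
      ((continuous_mul_const _).tendsto' 0 0 (zero_mul _)).mono_left nhdsWithin_le_nhds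
    have hev : ∀ᶠ t in 𝓝[>] (0 : ℝ), f b + ⟪r, d⟫ - f x ≤ t * (1 / 2 * ‖d‖ ^ 2) := by
      filter_upwards [Ioc_mem_nhdsGT one_pos] with t ht using hsmall t ht.1 ht.2
    linarith [ge_of_tendsto hlim hev]
  · intro hsub x
    have hres : y - A x = (y - A b) - A (x - b) := by simp only [map_sub]; abel
    rw [hres, norm_sub_sq_real (y - A b)]
    linarith [hsub x, sq_nonneg ‖A (x - b)‖]

end LeastSquares

theorem subdiff_const_mul {p : ℕ} {f : EuclideanSpace ℝ (Fin p) → ℝ} {c : ℝ} (hc : 0 < c)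
    (a : EuclideanSpace ℝ (Fin p)) : subdiff (fun x => c * f x) a = c • subdiff f a := by
  ext s
  rw [mem_smul_set_iff_inv_smul_mem₀ hc.ne']
  refine forall_congr' fun b => ?_
  rw [inner_smul_left, RCLike.conj_to_real]
  conv_rhs => rw [← mul_le_mul_iff_right₀ hc, mul_add, mul_inv_cancel_left₀ hc.ne']

theorem mem_Smin_iff_isMinOn {n p : ℕ} (X : Matrix (Fin n) (Fin p) ℝ) (lam : ℝ)
    (pen : EuclideanSpace ℝ (Fin p) → ℝ) (y : EuclideanSpace ℝ (Fin n))
    (b : EuclideanSpace ℝ (Fin p)) :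
    b ∈ Smin X lam pen y ↔
      IsMinOn (fun x => 1 / 2 * ‖y - X.toEuclideanLin x‖ ^ 2 + lam * pen x) univ b := by
  rw [isMinOn_univ_iff]
  exact ⟨fun h x => h x.ofLp, fun h x => h (toEuc x)⟩

theorem mem_Smin_iff_mem_subdiff {n p : ℕ} (X : Matrix (Fin n) (Fin p) ℝ) {lam : ℝ}
    (hlam : 0 ≤ lam) {pen : EuclideanSpace ℝ (Fin p) → ℝ} (hpen : ConvexOn ℝ univ pen)
    (y : EuclideanSpace ℝ (Fin n)) (b : EuclideanSpace ℝ (Fin p)) :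
    b ∈ Smin X lam pen y ↔
      Xᵀ.toEuclideanLin (y - X.toEuclideanLin b) ∈ subdiff (fun x => lam * pen x) b := by
  have hconv : ConvexOn ℝ univ fun x => lam * pen x := hpen.smul hlam
  rw [mem_Smin_iff_isMinOn, isMinOn_univ_half_sq_norm_sub_add_iff _ hconv]
  refine forall_congr' fun x => ?_
  rw [← Matrix.conjTranspose_eq_transpose_of_trivial,
    Matrix.toEuclideanLin_conjTranspose_eq_adjoint, LinearMap.adjoint_inner_left]

theorem accessibility_iff_subdiff_subset_general {n p k : ℕ}
    (X : Matrix (Fin n) (Fin p) ℝ) (lam : ℝ) (hlam : 0 < lam)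
    (u : Fin (k + 1) → EuclideanSpace ℝ (Fin p))
    (pen : EuclideanSpace ℝ (Fin p) → ℝ)
    (hpen : ∀ x, pen x = Finset.univ.sup' Finset.univ_nonempty fun i => ⟪u i, x⟫)
    (β : EuclideanSpace ℝ (Fin p)) :
    (∃ y : EuclideanSpace ℝ (Fin n), ∃ βh ∈ Smin X lam pen y,
        subdiff pen βh = subdiff pen β)
      ↔ (∃ y : EuclideanSpace ℝ (Fin n), ∃ βh ∈ Smin X lam pen y,
        subdiff pen βh ⊆ subdiff pen β) := by
  refine ⟨fun ⟨y, βh, hβh, heq⟩ => ⟨y, βh, hβh, heq.subset⟩, ?_⟩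
  rintro ⟨y, βh, hβh, hsub⟩
  have hconv : ConvexOn ℝ univ pen := by
    rw [funext hpen]
    exact ConvexOn.finset_sup' _ fun i _ => (innerₛₗ ℝ (u i)).convexOn convex_univ
  set r := y - X.toEuclideanLin βh
  refine ⟨r + X.toEuclideanLin β, β, ?_, rfl⟩
  rw [mem_Smin_iff_mem_subdiff X hlam.le hconv, subdiff_const_mul hlam] at hβh ⊢
  rw [add_sub_cancel_right]
  exact smul_set_mono hsub hβh

/-- There exist `y` and `β̂ ∈ S_{X,λpen}(y)` with `∂pen(β̂) = ∂pen(β)` if and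
only if there exist `y` and `β̂ ∈ S_{X,λpen}(y)` with `∂pen(β̂) ⊆ ∂pen(β)`. -/
theorem accessibility_iff_subdiff_subset {n p k : ℕ}
    (X : Matrix (Fin n) (Fin p) ℝ) (lam : ℝ) (hlam : 0 < lam)
    (u : Fin (k + 1) → EuclideanSpace ℝ (Fin p)) (hu : u 0 = 0)
    (pen : EuclideanSpace ℝ (Fin p) → ℝ)
    (hpen : ∀ x, pen x = Finset.univ.sup' Finset.univ_nonempty fun i => ⟪u i, x⟫)
    (β : EuclideanSpace ℝ (Fin p)) :
    (∃ y : EuclideanSpace ℝ (Fin n), ∃ βh ∈ Smin X lam pen y,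
        subdiff pen βh = subdiff pen β)
      ↔ (∃ y : EuclideanSpace ℝ (Fin n), ∃ βh ∈ Smin X lam pen y,
        subdiff pen βh ⊆ subdiff pen β) :=
  accessibility_iff_subdiff_subset_general X lam hlam u pen hpen β
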